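/- arXiv:1611.05885 — 3 statements merged into one kernel-verified Lean document; each statement's English description precedes it below -/
import Mathlib

section
/- Let R be a noetherian integral domain, let Σ ⊆ R be an additive subgroup, and fix r ∈ R. Let M be a finitely generated R-module such that for every nonzero s ∈ Σ and every x ∈ M, s • x = 0 implies x = 0 (M is saturated with respect to Σ \ {0}). Then the set of s ∈ Σ for which there exists a nonzero x ∈ M with (r - s) • x = 0 is finite. -/
/-!
If infinitely many `s₀, s₁, … ∈ Σ` had `r - sₙ` acting non-injectively on `M`, the torsion
submodules of `cₙ = ∏_{i<n} (r - sᵢ)` would form a strictly increasing chain, contradicting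
noetherianity. Strictness: a nonzero `x` killed by `r - sₙ` is multiplied by `cₙ` as by
`∏_{i<n} (sₙ - sᵢ)`, since `r - sₙ` divides the difference; the factors `sₙ - sᵢ` are nonzero
elements of `Σ`, hence act injectively, so `cₙ • x ≠ 0`.
-/

open Polynomial Submodule

lemma isSMulRegular_prod {R M ι : Type*} [CommMonoid R] [MulAction R M] {s : Finset ι}
    {f : ι → R} (h : ∀ i ∈ s, IsSMulRegular M (f i)) : IsSMulRegular M (∏ i ∈ s, f i) :=
  Finset.prod_induction f _ (fun _ _ ha hb => ha.mul hb) (.one M) h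

section

variable {R M ι : Type*} [CommRing R] [AddCommGroup M] [Module R M]

lemma smul_eq_smul_of_mem_torsionBy {d p q : R} {x : M} (hx : x ∈ torsionBy R M d)
    (hd : d ∣ p - q) : p • x = q • x := by
  obtain ⟨k, hk⟩ := hd
  rw [← sub_eq_zero, ← sub_smul, hk, mul_comm, mul_smul, (mem_torsionBy_iff _ x).mp hx,
    smul_zero]

lemma prod_sub_smul_eq_of_mem_torsionBy {a b : R} {x : M} (hx : x ∈ torsionBy R M (a - b))
    (s : Finset ι) (c : ι → R) :
    (∏ i ∈ s, (a - c i)) • x = (∏ i ∈ s, (b - c i)) • x :=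
  smul_eq_smul_of_mem_torsionBy hx <| by
    convert sub_dvd_eval_sub a b (∏ i ∈ s, (X - C (c i))) <;> simp [eval_prod]

lemma notMem_torsionBy_prod_sub {a b : R} {x : M} (hx : x ∈ torsionBy R M (a - b))
    (hx0 : x ≠ 0) {s : Finset ι} {c : ι → R} (hreg : ∀ i ∈ s, IsSMulRegular M (b - c i)) :
    x ∉ torsionBy R M (∏ i ∈ s, (a - c i)) := by
  rw [mem_torsionBy_iff, prod_sub_smul_eq_of_mem_torsionBy hx]
  exact fun h => hx0 ((isSMulRegular_prod hreg).right_eq_zero_of_smul h)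

lemma strictMono_torsionBy_prod_sub {a : R} {s : ℕ → R}
    (hker : ∀ n, ∃ x : M, x ≠ 0 ∧ (a - s n) • x = 0)
    (hreg : ∀ n, ∀ i < n, IsSMulRegular M (s n - s i)) :
    StrictMono fun n => torsionBy R M (∏ i ∈ Finset.range n, (a - s i)) := by
  refine strictMono_nat_of_lt_succ fun n => ?_
  obtain ⟨x, hx0, hx⟩ := hker n
  simp only [Finset.prod_range_succ]
  refine SetLike.lt_iff_le_and_exists.mpr
    ⟨torsionBy_le_torsionBy_of_dvd _ _ (dvd_mul_right _ _), x, ?_, ?_⟩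
  · exact torsionBy_le_torsionBy_of_dvd _ _ (dvd_mul_left _ _) hx
  · exact notMem_torsionBy_prod_sub hx hx0 fun i hi => hreg n i (Finset.mem_range.mp hi)

end

theorem stmt0_general (R : Type*) [CommRing R] [IsNoetherianRing R]
    (Sg : AddSubgroup R) (r : R)
    (M : Type*) [AddCommGroup M] [Module R M] [Module.Finite R M]
    (hsat : ∀ s ∈ Sg, s ≠ 0 → ∀ x : M, s • x = 0 → x = 0) :
    {s : R | s ∈ Sg ∧ ∃ x : M, x ≠ 0 ∧ (r - s) • x = 0}.Finite := by
  by_contra hinf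
  obtain e := Set.Infinite.natEmbedding _ hinf
  have hreg : ∀ n, ∀ i < n, IsSMulRegular M ((e n : R) - e i) := fun n i hi =>
    isSMulRegular_iff_right_eq_zero_of_smul.mpr <|
      hsat _ (Sg.sub_mem (e n).2.1 (e i).2.1)
        (sub_ne_zero.mpr fun h => hi.ne' (e.injective (Subtype.ext h)))
  exact not_strictMono_of_wellFoundedGT _
    (strictMono_torsionBy_prod_sub (fun n => (e n).2.2) hreg)

/-- Let `R` be a noetherian integral domain, `Σ` an additive subgroup of `R`, `r ∈ R`,
and `M` a finitely generated `R`-module which is saturated with respect to every nonzero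
element of `Σ`.  Then the set of `s ∈ Σ` such that `M` is not saturated with respect to
`r - s` (i.e. such that some nonzero `x ∈ M` satisfies `(r - s) • x = 0`) is finite. -/
theorem stmt0 (R : Type*) [CommRing R] [IsDomain R] [IsNoetherianRing R]
    (Sg : AddSubgroup R) (r : R)
    (M : Type*) [AddCommGroup M] [Module R M] [Module.Finite R M]
    (hsat : ∀ s ∈ Sg, s ≠ 0 → ∀ x : M, s • x = 0 → x = 0) :
    {s : R | s ∈ Sg ∧ ∃ x : M, x ≠ 0 ∧ (r - s) • x = 0}.Finite :=
  stmt0_general R Sg r M hsat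
end

section
/- Let R be a commutative ring, M a finitely generated R-module, and suppose the zero submodule of M has a primary decomposition 0 = N₁ ∩ ⋯ ∩ N_t with each N_i a primary submodule. Fix r ∈ R and an additive subgroup Σ ⊆ R such that M is saturated with respect to every nonzero element of Σ. Then the set {s ∈ Σ : M is not saturated with respect to r − s} has cardinality at most t. -/
/-!
Write `√(N : M)` for the radical of the annihilator of `M ⧸ N`. If `r - s` kills a nonzero
`x ∈ M`, then `x ∉ Nᵢ` for some `i`, and primality of `Nᵢ` puts `r - s` into `√(Nᵢ : M)`. Two
distinct `s₁, s₂ ∈ Σ` with `r - s₁, r - s₂ ∈ √(Nᵢ : M)` would put the nonzero `s₁ - s₂ ∈ Σ`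
into that radical; a power of it then maps any `x ∈ ⋂_{j ≠ i} Nⱼ ∖ Nᵢ` (which exists by
minimality) into `⋂ⱼ Nⱼ = 0`, contradicting saturation.
Hence each `Nᵢ` accounts for at most one such `s`.
-/

/-- A submodule `N ⊆ M` is primary if every zero divisor on `M/N` is nilpotent on `M/N`. -/
def IsPrimarySubmodule {R M : Type*} [CommRing R] [AddCommGroup M] [Module R M]
    (N : Submodule R M) : Prop :=
  ∀ x : R, (∃ m : M, m ∉ N ∧ x • m ∈ N) → ∃ n : ℕ, ∀ m : M, x ^ n • m ∈ N

theorem Set.exists_finset_card_le_of_subset_iUnion_subsingleton {ι α : Type*} [Fintype ι]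
    {S : Set α} {A : ι → Set α} (hA : ∀ i, (A i).Subsingleton) (hS : S ⊆ ⋃ i, A i) :
    ∃ F : Finset α, F.card ≤ Fintype.card ι ∧ S ⊆ F := by
  have hfin : (⋃ i, A i).Finite := Set.finite_iUnion fun i => (hA i).finite
  refine ⟨hfin.toFinset, ?_, by simpa using hS⟩
  rw [← Set.ncard_eq_toFinset_card _ hfin]
  calc (⋃ i, A i).ncard ≤ ∑ i, (A i).ncard := Set.ncard_iUnion_le_of_fintype A
    _ ≤ ∑ _i : ι, 1 :=
      Finset.sum_le_sum fun i _ => (Set.ncard_le_one_iff (hA i).finite).2 fun ha hb => hA i ha hb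
    _ = Fintype.card ι := by simp

theorem AddSubgroup.subsingleton_setOf_sub_mem {R : Type*} [Ring R] {Sg : AddSubgroup R}
    {I : Ideal R} (hSg : ∀ s ∈ Sg, s ∈ I → s = 0) (r : R) :
    {s | s ∈ Sg ∧ r - s ∈ I}.Subsingleton := by
  rintro s₁ ⟨hs₁, hr₁⟩ s₂ ⟨hs₂, hr₂⟩
  refine sub_eq_zero.1 (hSg _ (Sg.sub_mem hs₁ hs₂) ?_)
  simpa only [sub_sub_sub_cancel_left] using I.sub_mem hr₂ hr₁

section Module

variable {R M : Type*} [CommRing R] [AddCommGroup M] [Module R M]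

theorem IsPrimarySubmodule.mem_radical_colon {N : Submodule R M} (hN : IsPrimarySubmodule N)
    {a : R} {x : M} (hx : x ∉ N) (hax : a • x ∈ N) : a ∈ (N.colon Set.univ).radical := by
  obtain ⟨n, hn⟩ := hN a ⟨x, hx, hax⟩
  exact ⟨n, Submodule.mem_colon.2 fun m _ => hn m⟩

theorem Submodule.exists_notMem_of_iInf_eq_bot {ι : Type*} {N : ι → Submodule R M}
    (hdec : ⨅ i, N i = ⊥) {x : M} (hx : x ≠ 0) : ∃ i, x ∉ N i := by
  by_contra! h
  exact hx (by simpa [hdec] using (Submodule.mem_iInf N).2 h)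

theorem not_isSMulRegular_of_mem_radical_colon {ι : Type*} {N : ι → Submodule R M}
    (hdec : ⨅ i, N i = ⊥) {i : ι} {x : M} (hx : x ∈ ⨅ j ∈ ({i}ᶜ : Set ι), N j) (hxi : x ∉ N i)
    {a : R} (ha : a ∈ ((N i).colon Set.univ).radical) : ¬ IsSMulRegular M a := by
  obtain ⟨k, hk⟩ := ha
  intro hreg
  have hkx : a ^ k • x = 0 := by
    rw [← Submodule.mem_bot R, ← hdec, Submodule.mem_iInf]
    intro j
    by_cases hji : j = i
    · subst hji
      exact Submodule.mem_colon.1 hk x trivial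
    · exact (N j).smul_mem _ ((Submodule.mem_iInf _).1 ((Submodule.mem_iInf _).1 hx j) hji)
  exact hxi ((hreg.pow k).right_eq_zero_of_smul hkx ▸ (N i).zero_mem)

end Module

theorem stmt14_general (R : Type*) [CommRing R] (M : Type*) [AddCommGroup M] [Module R M]
    (t : ℕ) (N : Fin t → Submodule R M)
    (hdec : (⨅ i, N i) = ⊥)
    (hprimary : ∀ i, IsPrimarySubmodule (N i))
    (hmin : ∀ i, ¬ (⨅ j ∈ ({i}ᶜ : Set (Fin t)), N j) ≤ N i)
    (r : R) (Sg : AddSubgroup R)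
    (hsat : ∀ s ∈ Sg, s ≠ 0 → ∀ x : M, s • x = 0 → x = 0) :
    ∃ F : Finset R, F.card ≤ t ∧
      {s : R | s ∈ Sg ∧ ∃ x : M, x ≠ 0 ∧ (r - s) • x = 0} ⊆ ↑F := by
  have hreg (s) (hs : s ∈ Sg) (hs0 : s ≠ 0) : IsSMulRegular M s :=
    .of_right_eq_zero_of_smul (hsat s hs hs0)
  have hsub (i) : {s | s ∈ Sg ∧ r - s ∈ ((N i).colon Set.univ).radical}.Subsingleton := by
    obtain ⟨x, hx, hxi⟩ := SetLike.not_le_iff_exists.1 (hmin i)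
    refine AddSubgroup.subsingleton_setOf_sub_mem (fun s hs hsrad => ?_) r
    by_contra hs0
    exact not_isSMulRegular_of_mem_radical_colon hdec hx hxi hsrad (hreg s hs hs0)
  have hcover : {s : R | s ∈ Sg ∧ ∃ x : M, x ≠ 0 ∧ (r - s) • x = 0} ⊆
      ⋃ i, {s | s ∈ Sg ∧ r - s ∈ ((N i).colon Set.univ).radical} := by
    rintro s ⟨hs, x, hx0, hx⟩
    obtain ⟨i, hxi⟩ := Submodule.exists_notMem_of_iInf_eq_bot hdec hx0
    exact Set.mem_iUnion.2 ⟨i, hs, (hprimary i).mem_radical_colon hxi (hx ▸ (N i).zero_mem)⟩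
  simpa using Set.exists_finset_card_le_of_subset_iUnion_subsingleton hsub hcover

/-- Let `R` be a commutative ring, `M` a finitely generated `R`-module with a minimal
primary decomposition `0 = N₁ ∩ ⋯ ∩ N_t`.  Fix `r ∈ R` and an additive subgroup `Σ ⊆ R`
such that `M` is saturated with respect to every nonzero element of `Σ`.  Then the set of
`s ∈ Σ` such that `M` is not saturated with respect to `r - s` has at most `t` elements. -/
theorem stmt14 (R : Type*) [CommRing R] (M : Type*) [AddCommGroup M] [Module R M]
    [Module.Finite R M]
    (t : ℕ) (N : Fin t → Submodule R M)
    (hdec : (⨅ i, N i) = ⊥)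
    (hprimary : ∀ i, IsPrimarySubmodule (N i))
    (hproper : ∀ i, N i ≠ ⊤)
    (hmin : ∀ i, ¬ (⨅ j ∈ ({i}ᶜ : Set (Fin t)), N j) ≤ N i)
    (r : R) (Sg : AddSubgroup R)
    (hsat : ∀ s ∈ Sg, s ≠ 0 → ∀ x : M, s • x = 0 → x = 0) :
    ∃ F : Finset R, F.card ≤ t ∧
      {s : R | s ∈ Sg ∧ ∃ x : M, x ≠ 0 ∧ (r - s) • x = 0} ⊆ ↑F :=
  stmt14_general R M t N hdec hprimary hmin r Sg hsat
end

section
/- Let X be an irreducible variety over an algebraically closed field, f : X → X an automorphism, and x₀ ∈ X with orbit {fⁿ(x₀) : n ∈ ℤ} Zariski dense in X. If P = m + aℤ (a ≥ 1) is an arithmetic progression with fⁿ(x₀) ∈ Z for all n ∈ P, where Z is a Zariski-closed subset of X, then Z = X. -/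
/-- Let `X` be an irreducible variety (formalized topologically: an irreducible
topological space with its Zariski topology), `f` an automorphism of `X` (a bicontinuous
bijection), and `x₀` a point whose doubly infinite orbit `{fⁿ(x₀) : n ∈ ℤ}` is Zariski
dense.  If `Z` is a Zariski-closed subset containing `fⁿ(x₀)` for all `n` in an
arithmetic progression `m + aℤ` with `a ≥ 1`, then `Z = X`. -/
theorem stmt18 (X : Type*) [TopologicalSpace X] [IrreducibleSpace X]
    (f : X ≃ X) (hf : Continuous f) (hf' : Continuous f.symm)
    (x₀ : X) (hdense : Dense {y : X | ∃ n : ℤ, (f ^ n) x₀ = y})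
    (m a : ℤ) (ha : 1 ≤ a)
    (Z : Set X) (hZ : IsClosed Z)
    (hP : ∀ l : ℤ, (f ^ (m + a * l)) x₀ ∈ Z) :
    Z = Set.univ := by
  classical
  -- continuity of all integer powers of f
  have hcont : ∀ n : ℤ, Continuous ⇑(f ^ n) := by
    intro n
    induction n using Int.induction_on with
    | zero => simpa using continuous_id
    | succ k ih =>
      have : (f ^ ((k : ℤ) + 1)) = f ^ (k : ℤ) * f := by rw [zpow_add, zpow_one]
      rw [this]
      have : ⇑(f ^ (k : ℤ) * f) = ⇑(f ^ (k : ℤ)) ∘ ⇑f := rfl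
      rw [this]; exact ih.comp hf
    | pred k ih =>
      have : (f ^ (-(k : ℤ) - 1)) = f ^ (-(k : ℤ)) * f⁻¹ := by
        rw [← zpow_neg_one, ← zpow_add]; ring_nf
      rw [this]
      have h2 : ⇑(f ^ (-(k : ℤ)) * f⁻¹) = ⇑(f ^ (-(k : ℤ))) ∘ ⇑f⁻¹ := rfl
      have h3 : ⇑(f⁻¹) = ⇑f.symm := rfl
      rw [h2, h3]; exact ih.comp hf'
  -- Y : closure of the subsequence orbit
  set Y : Set X := closure {y : X | ∃ l : ℤ, (f ^ (m + a * l)) x₀ = y} with hY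
  have hYZ : Y ⊆ Z := by
    apply closure_minimal _ hZ
    rintro y ⟨l, rfl⟩; exact hP l
  have hYclosed : IsClosed Y := isClosed_closure
  -- images of Y under powers of f are closed
  have himg_closed : ∀ j : ℤ, IsClosed (⇑(f ^ j) '' Y) := by
    intro j
    rw [Equiv.image_eq_preimage_symm]
    have : ⇑(f ^ j).symm = ⇑(f ^ (-j)) := by
      rw [zpow_neg]; rfl
    rw [this]
    exact hYclosed.preimage (hcont (-j))
  -- every orbit point lies in some f^j '' Y, 0 ≤ j < a
  have horb : ∀ n : ℤ, ∃ j : ℤ, 0 ≤ j ∧ j < a ∧ (f ^ n) x₀ ∈ ⇑(f ^ j) '' Y := by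
    intro n
    have ha0 : a ≠ 0 := by omega
    refine ⟨(n - m) % a, Int.emod_nonneg _ ha0, Int.emod_lt_of_pos _ (by omega), ?_⟩
    set r := (n - m) % a with hr
    set q := (n - m) / a with hq
    have hd : (n - m) % a + a * ((n - m) / a) = n - m := Int.emod_add_mul_ediv (n - m) a
    have hn : n = r + (m + a * q) := by
      rw [hr, hq]; omega
    refine ⟨(f ^ (m + a * q)) x₀, subset_closure ⟨q, rfl⟩, ?_⟩
    have : (f ^ (r + (m + a * q))) x₀ = (f ^ r) ((f ^ (m + a * q)) x₀) := by
      rw [zpow_add]; rfl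
    rw [← this, ← hn]
  -- the finite family of closed sets
  set t : Finset (Set X) :=
    (Finset.Ico (0:ℤ) a).image (fun j => ⇑(f ^ j) '' Y) with ht
  have htclosed : ∀ z ∈ t, IsClosed z := by
    intro z hz
    simp only [ht, Finset.mem_image] at hz
    obtain ⟨j, _, rfl⟩ := hz
    exact himg_closed _
  have hcover : (Set.univ : Set X) ⊆ ⋃₀ ↑t := by
    have hdense' : Dense (⋃₀ (↑t : Set (Set X))) := by
      apply Dense.mono _ hdense
      rintro y ⟨n, rfl⟩
      obtain ⟨j, hj0, hja, hjm⟩ := horb n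
      refine ⟨⇑(f ^ j) '' Y, ?_, hjm⟩
      simp only [ht, Finset.coe_image, Set.mem_image, Finset.mem_coe, Finset.mem_Ico]
      exact ⟨j, ⟨hj0, hja⟩, rfl⟩
    have hclosed : IsClosed (⋃₀ (↑t : Set (Set X))) := by
      rw [Set.sUnion_eq_biUnion]
      exact Set.Finite.isClosed_biUnion t.finite_toSet htclosed
    have := hdense'.closure_eq
    rw [hclosed.closure_eq] at this
    exact this.ge
  obtain ⟨s, hst, hs⟩ := (isIrreducible_iff_sUnion_isClosed.mp
    (IrreducibleSpace.isIrreducible_univ X)) t htclosed hcover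
  simp only [ht, Finset.mem_image] at hst
  obtain ⟨j, _, rfl⟩ := hst
  -- f^j '' Y = univ implies Y = univ
  have hYuniv : Y = Set.univ := by
    apply Set.eq_univ_of_forall
    intro x
    have hmem : (f ^ (j : ℤ)) x ∈ ⇑(f ^ (j : ℤ)) '' Y := hs (Set.mem_univ _)
    obtain ⟨y, hy, hxy⟩ := hmem
    have : y = x := (f ^ (j : ℤ)).injective hxy
    rwa [← this]
  apply Set.eq_univ_of_univ_subset
  rw [← hYuniv]; exact hYZ
end
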